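/- arXiv:1802.07700 — 3 statements merged into one kernel-verified Lean document; each statement's English description precedes it below -/
import Mathlib

section
/- Let 0 < ε < d ≤ 1 with 2ε ≤ d (and n sufficiently large). Let G be a bipartite graph with bipartition (A,B), |A| = |B| = n, that is lower (ε,d)-super-regular. Then for every perfect matching M of G and every edge e ∈ M, there are at least (d - 2ε)³ n² edges of G that are (e,M)-switchable. -/
open Finset

/-- Proposition `prop:many switchings`.
In a lower (ε,d)-super-regular balanced bipartite graph on parts of size `n`
(with `0 < ε < d ≤ 1`, `2ε ≤ d` and `n` sufficiently large), for every perfect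
matching `M` and every edge `a₁ (M a₁)` of `M`, at least `(d-2ε)³ n²` edges of the
graph are `(e,M)`-switchable. -/
theorem stmt1 :
    ∀ ε d : ℝ, 0 < ε → ε < d → d ≤ 1 → 2 * ε ≤ d →
    ∃ n₀ : ℕ, ∀ n : ℕ, n₀ ≤ n →
    ∀ (adj : Fin n → Fin n → Prop) [∀ a b, Decidable (adj a b)],
    -- lower (ε,d)-regularity (density of large subsets is at least d - ε)
    (∀ S T : Finset (Fin n), ε * n ≤ S.card → ε * n ≤ T.card →
      d - ε ≤ (((S ×ˢ T).filter fun p => adj p.1 p.2).card : ℝ) / (S.card * T.card)) →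
    -- minimum degree conditions on both sides
    (∀ a : Fin n, (d - ε) * n ≤ ((Finset.univ.filter fun b => adj a b).card : ℝ)) →
    (∀ b : Fin n, (d - ε) * n ≤ ((Finset.univ.filter fun a => adj a b).card : ℝ)) →
    -- M is a perfect matching of the graph
    ∀ M : Fin n ≃ Fin n, (∀ a, adj a (M a)) →
    -- e = a₁b₁ ∈ M, where b₁ = M a₁
    ∀ a₁ : Fin n,
    -- there are at least (d-2ε)³n² edges ab ∈ E(G) \ M that are (e,M)-switchable,
    -- i.e. a₁b₂ ∈ E(G) and a₂b₁ ∈ E(G) where a₂ = M⁻¹ b and b₂ = M a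
    (d - 2 * ε) ^ 3 * (n : ℝ) ^ 2 ≤
      (((Finset.univ : Finset (Fin n × Fin n)).filter fun p =>
        adj p.1 p.2 ∧ M p.1 ≠ p.2 ∧ adj a₁ (M p.1) ∧ adj (M.symm p.2) (M a₁)).card : ℝ) := by
  intro ε d hε hεd hd1 h2ε
  set δ : ℝ := (d - ε) ^ 3 - (d - 2 * ε) ^ 3 with hδdef
  have hdε : 0 < d - ε := by linarith
  have hd2ε : 0 ≤ d - 2 * ε := by linarith
  have hδ : 0 < δ := by
    have hlt : d - 2 * ε < d - ε := by linarith
    have := pow_lt_pow_left₀ hlt hd2ε (by norm_num : (3:ℕ) ≠ 0)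
    simp only [hδdef]; linarith
  refine ⟨max 1 ⌈1 / δ⌉₊, ?_⟩
  intro n hn adj _ hreg hdegA hdegB M hM a₁
  have hn1 : 1 ≤ n := le_trans (le_max_left _ _) hn
  have hnR : (1:ℝ) ≤ (n:ℝ) := by exact_mod_cast hn1
  have hn0 : (0:ℝ) < n := by linarith
  have hnδ : 1 / δ ≤ (n:ℝ) := by
    calc 1 / δ ≤ (⌈1 / δ⌉₊ : ℝ) := Nat.le_ceil _
      _ ≤ n := by exact_mod_cast le_trans (le_max_right _ _) hn
  have hδn : 1 ≤ δ * n := by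
    rw [div_le_iff₀ hδ] at hnδ
    linarith [hnδ]
  -- key sets
  set S : Finset (Fin n) := univ.filter (fun a => adj a₁ (M a)) with hSdef
  set T : Finset (Fin n) := univ.filter (fun b => adj (M.symm b) (M a₁)) with hTdef
  have hScard : (d - ε) * n ≤ (S.card : ℝ) := by
    have hcard : S.card = (univ.filter (fun b => adj a₁ b)).card := by
      apply Finset.card_equiv M
      intro a
      simp [hSdef]
    rw [hcard]; exact hdegA a₁
  have hTcard : (d - ε) * n ≤ (T.card : ℝ) := by
    have hcard : T.card = (univ.filter (fun a => adj a (M a₁))).card := by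
      apply Finset.card_equiv M.symm
      intro b
      simp [hTdef]
    rw [hcard]; exact hdegB (M a₁)
  have hεS : ε * n ≤ (S.card : ℝ) := le_trans (by nlinarith) hScard
  have hεT : ε * n ≤ (T.card : ℝ) := le_trans (by nlinarith) hTcard
  have hSpos : (0:ℝ) < S.card := lt_of_lt_of_le (by nlinarith) hScard
  have hTpos : (0:ℝ) < T.card := lt_of_lt_of_le (by nlinarith) hTcard
  -- regularity edge count
  have hreg' := hreg S T hεS hεT
  set E : Finset (Fin n × Fin n) := (S ×ˢ T).filter (fun p => adj p.1 p.2) with hEdef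
  have hEcard : (d - ε) * ((S.card : ℝ) * T.card) ≤ (E.card : ℝ) := by
    rw [le_div_iff₀ (by positivity)] at hreg'
    linarith [hreg']
  have hEbig : (d - ε) ^ 3 * (n:ℝ) ^ 2 ≤ (E.card : ℝ) := by
    calc (d - ε) ^ 3 * (n:ℝ) ^ 2 = (d - ε) * (((d - ε) * n) * ((d - ε) * n)) := by ring
      _ ≤ (d - ε) * ((S.card : ℝ) * T.card) := by
          apply mul_le_mul_of_nonneg_left _ hdε.le
          exact mul_le_mul hScard hTcard (by positivity) hSpos.le
      _ ≤ (E.card : ℝ) := hEcard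
  -- E as a filter over univ
  set E1 : Finset (Fin n × Fin n) := univ.filter
    (fun p => adj p.1 p.2 ∧ adj a₁ (M p.1) ∧ adj (M.symm p.2) (M a₁)) with hE1def
  have hEE1 : E = E1 := by
    ext p
    simp only [hEdef, hE1def, hSdef, hTdef, Finset.mem_filter, Finset.mem_product,
      Finset.mem_univ, true_and]
    tauto
  -- split E1 into matching pairs and the target
  set X : Finset (Fin n × Fin n) := univ.filter
    (fun p => adj p.1 p.2 ∧ M p.1 ≠ p.2 ∧ adj a₁ (M p.1) ∧ adj (M.symm p.2) (M a₁)) with hXdef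
  set D : Finset (Fin n × Fin n) := E1.filter (fun p => M p.1 = p.2) with hDdef
  have hsplit : D.card + X.card = E1.card := by
    have hX' : E1.filter (fun p => ¬ M p.1 = p.2) = X := by
      ext p
      simp only [hE1def, hXdef, Finset.mem_filter, Finset.mem_univ, true_and]
      tauto
    rw [← hX', hDdef]
    exact Finset.card_filter_add_card_filter_not _
  have hDcard : D.card ≤ n := by
    have : D.card ≤ (univ : Finset (Fin n)).card := by
      apply Finset.card_le_card_of_injOn (fun p => p.1) (fun p _ => Finset.mem_univ _)
      intro p hp q hq hpq
      simp only [hDdef, Finset.mem_coe, Finset.mem_filter] at hp hq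
      have h1 : M p.1 = p.2 := hp.2
      have h2 : M q.1 = q.2 := hq.2
      have hpq' : p.1 = q.1 := hpq
      exact Prod.ext hpq' (by rw [← h1, ← h2, hpq'])
    simpa using this
  -- conclude
  have hXge : (E.card : ℝ) - n ≤ (X.card : ℝ) := by
    rw [hEE1, ← hsplit]
    push_cast
    have : (D.card : ℝ) ≤ n := by exact_mod_cast hDcard
    linarith
  have hfinal : (d - 2 * ε) ^ 3 * (n:ℝ) ^ 2 ≤ (d - ε) ^ 3 * (n:ℝ) ^ 2 - n := by
    have : (1:ℝ) * n ≤ (δ * n) * n := by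
      apply mul_le_mul_of_nonneg_right _ hn0.le
      exact hδn
    simp only [hδdef] at this
    nlinarith [this]
  linarith [hEbig, hXge, hfinal]
end

section
/- Suppose 1/n ≪ μ ≪ ε ≪ d and μ ≪ 1/r. Let V₁,…,V_r be disjoint vertex sets with total size n and n/(2r) ≤ |V_i| ≤ 2n/r for all i, and let X₁,…,X_r be disjoint vertex sets with |X_i| ≤ εn/r. Let G be a bipartite graph with parts X = ∪X_i and V = ∪V_i in which every edge joins X_i and V_i for some i, and with d_G(x) ≥ dn/r for all x ∈ X. Then for any μn-bounded system of conflicts on E(G), there exists a conflict-free matching in G covering X. -/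
/-!
Pick for every `x ∈ X` one of its neighbours, independently and uniformly. The matching fails
only if some pair of edges `xv, x'v'` with `x ≠ x'` is picked where the two edges conflict or
`v = v'`. Such a pair is picked with probability at most `(r / dn)²`, and, as an edge lies in
at most `μn + εn/r` such pairs (`|X_i| ≤ εn/r` bounds those with `v = v'`), it shares a vertex
of `X` with at most `4 · (2n/r) · (μn + εn/r)` others. For `μ, ε ≪ d²` the symmetric local
lemma gives an assignment avoiding all of them.

The local lemma is proved by counting assignments: if `T'` is the set of pairs of `T` sharing
no vertex with `p`, then pinning the two values of `p` cuts the assignments avoiding `T'` by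
exactly the factor `|N x| |N x'|`, and induction gives `|avoid T'| ≤ 2 |avoid T|`.
-/

open Finset Fintype

namespace PairEvents

variable {ι β : Type*} [DecidableEq ι]

def coords (p : (ι × β) × (ι × β)) : Finset ι := {p.1.1, p.2.1}

theorem one_le_card_filter_not_disjoint_coords {P : Finset ((ι × β) × (ι × β))}
    {p : (ι × β) × (ι × β)} (hp : p ∈ P) :
    1 ≤ #(P.filter fun t => ¬Disjoint (coords t) (coords p)) :=
  card_pos.2 ⟨p, mem_filter.2 ⟨hp, by simp [coords]⟩⟩

variable [DecidableEq β] {N : ι → Finset β}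

theorem card_filter_apply_eq_mul {A : Finset (ι → β)} {a : ι} {u : β} (hu : u ∈ N a)
    (hA : ∀ σ ∈ A, σ a ∈ N a) (hupdate : ∀ σ ∈ A, ∀ w ∈ N a, Function.update σ a w ∈ A) :
    #(A.filter (· a = u)) * #(N a) = #A := by
  have fiber : ∀ w ∈ N a, #(A.filter (· a = w)) = #(A.filter (· a = u)) := by
    intro w hw
    refine card_nbij' (Function.update · a u) (Function.update · a w) ?_ ?_ ?_ ?_ <;>
      intro σ hσ <;> simp only [coe_filter, Set.mem_ofPred_eq] at hσ ⊢
    · exact ⟨hupdate σ hσ.1 u hu, Function.update_self ..⟩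
    · exact ⟨hupdate σ hσ.1 w hw, Function.update_self ..⟩
    · rw [Function.update_idem, ← hσ.2, Function.update_eq_self]
    · rw [Function.update_idem, ← hσ.2, Function.update_eq_self]
  rw [card_eq_sum_card_fiberwise hA, sum_congr rfl fiber, sum_const, smul_eq_mul, mul_comm]

variable [Fintype ι] (N)

abbrev Hits (σ : ι → β) (p : (ι × β) × (ι × β)) : Prop :=
  σ p.1.1 = p.1.2 ∧ σ p.2.1 = p.2.2

def avoiding (S : Finset ((ι × β) × (ι × β))) : Finset (ι → β) :=
  (piFinset N).filter fun σ => ∀ p ∈ S, ¬Hits σ p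

variable {N}

theorem mem_avoiding {S : Finset ((ι × β) × (ι × β))} {σ : ι → β} :
    σ ∈ avoiding N S ↔ σ ∈ piFinset N ∧ ∀ p ∈ S, ¬Hits σ p :=
  mem_filter

theorem avoiding_empty : avoiding N ∅ = piFinset N := by
  simp [avoiding]

theorem avoiding_anti {S T : Finset ((ι × β) × (ι × β))} (h : S ⊆ T) :
    avoiding N T ⊆ avoiding N S :=
  fun _ hσ => mem_avoiding.2 ⟨(mem_avoiding.1 hσ).1, fun p hp => (mem_avoiding.1 hσ).2 p (h hp)⟩

theorem avoiding_insert (p : (ι × β) × (ι × β)) (S : Finset ((ι × β) × (ι × β))) :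
    avoiding N (insert p S) = (avoiding N S).filter (¬Hits · p) := by
  ext σ
  simp only [mem_avoiding, mem_filter, forall_mem_insert]
  tauto

theorem update_mem_avoiding {S : Finset ((ι × β) × (ι × β))} {σ : ι → β} {a : ι} {w : β}
    (hσ : σ ∈ avoiding N S) (hw : w ∈ N a) (hS : ∀ p ∈ S, a ∉ coords p) :
    Function.update σ a w ∈ avoiding N S := by
  rw [mem_avoiding, mem_piFinset] at hσ ⊢
  refine ⟨fun i => ?_, fun p hp => ?_⟩
  · rcases eq_or_ne i a with rfl | hi
    · simpa using hw
    · simpa [hi] using hσ.1 i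
  · have ha := hS p hp
    simp only [coords, mem_insert, mem_singleton, not_or] at ha
    simpa [Function.update_of_ne (Ne.symm ha.1), Function.update_of_ne (Ne.symm ha.2)]
      using hσ.2 p hp

theorem card_filter_hits_mul {S : Finset ((ι × β) × (ι × β))} {p : (ι × β) × (ι × β)}
    (hab : p.1.1 ≠ p.2.1) (hu : p.1.2 ∈ N p.1.1) (hv : p.2.2 ∈ N p.2.1)
    (hS : ∀ t ∈ S, Disjoint (coords t) (coords p)) :
    #((avoiding N S).filter (Hits · p)) * (#(N p.1.1) * #(N p.2.1)) = #(avoiding N S) := by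
  have off : ∀ c ∈ coords p, ∀ t ∈ S, c ∉ coords t := fun c hc t ht hct =>
    disjoint_left.1 (hS t ht) hct hc
  have ha : p.1.1 ∈ coords p := by simp [coords]
  have hb : p.2.1 ∈ coords p := by simp [coords]
  have mem : ∀ σ ∈ avoiding N S, ∀ i, σ i ∈ N i := fun σ hσ =>
    mem_piFinset.1 (mem_avoiding.1 hσ).1
  have hsplit : (avoiding N S).filter (Hits · p)
      = ((avoiding N S).filter (· p.2.1 = p.2.2)).filter (· p.1.1 = p.1.2) := by
    rw [filter_filter]
    exact filter_congr fun _ _ => and_comm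
  rw [hsplit, ← mul_assoc, card_filter_apply_eq_mul hu, card_filter_apply_eq_mul hv]
  · exact fun σ hσ => mem σ hσ _
  · exact fun σ hσ w hw => update_mem_avoiding hσ hw (off _ hb)
  · exact fun σ hσ => mem σ (mem_filter.1 hσ).1 _
  · intro σ hσ w hw
    obtain ⟨hσ, hσb⟩ := mem_filter.1 hσ
    refine mem_filter.2 ⟨update_mem_avoiding hσ hw (off _ ha), ?_⟩
    rwa [Function.update_of_ne hab.symm]

theorem card_avoiding_insert_add (p : (ι × β) × (ι × β)) (S : Finset ((ι × β) × (ι × β))) :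
    #(avoiding N (insert p S)) + #((avoiding N S).filter (Hits · p)) = #(avoiding N S) := by
  rw [avoiding_insert, add_comm]
  exact card_filter_add_card_filter_not _

theorem one_sub_two_mul_card_avoiding_le {T : Finset ((ι × β) × (ι × β))}
    {p : (ι × β) × (ι × β)} {q : ℝ}
    (hab : p.1.1 ≠ p.2.1) (hu : p.1.2 ∈ N p.1.1) (hv : p.2.2 ∈ N p.2.1)
    (hq : 1 ≤ q * (#(N p.1.1) * #(N p.2.1)))
    (hT : (#(avoiding N (T.filter fun t => Disjoint (coords t) (coords p))) : ℝ)
      ≤ 2 * #(avoiding N T)) :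
    (1 - 2 * q) * #(avoiding N T) ≤ #(avoiding N (insert p T)) := by
  set T' := T.filter fun t => Disjoint (coords t) (coords p)
  have hpin : #((avoiding N T').filter (Hits · p)) * (#(N p.1.1) * #(N p.2.1))
      = #(avoiding N T') :=
    card_filter_hits_mul hab hu hv fun t ht => (mem_filter.1 ht).2
  have hsub : #((avoiding N T).filter (Hits · p)) ≤ #((avoiding N T').filter (Hits · p)) :=
    card_le_card (filter_subset_filter _ (avoiding_anti (filter_subset _ _)))
  have hq0 : 0 ≤ q := (pos_of_mul_pos_left (one_pos.trans_le hq) (by positivity)).le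
  have hhits : (#((avoiding N T).filter (Hits · p)) : ℝ) ≤ q * #(avoiding N T') :=
    calc (#((avoiding N T).filter (Hits · p)) : ℝ)
        ≤ #((avoiding N T').filter (Hits · p)) := by exact_mod_cast hsub
      _ ≤ q * (#(N p.1.1) * #(N p.2.1)) * #((avoiding N T').filter (Hits · p)) :=
        le_mul_of_one_le_left (by positivity) hq
      _ = q * #(avoiding N T') := by rw [← hpin]; push_cast; ring
  have hsplit : (#(avoiding N (insert p T)) : ℝ) + #((avoiding N T).filter (Hits · p))
      = #(avoiding N T) := by exact_mod_cast card_avoiding_insert_add p T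
  linarith [mul_le_mul_of_nonneg_left hT hq0]

section LocalLemma

variable {P : Finset ((ι × β) × (ι × β))} {q Δ : ℝ}

theorem pow_mul_card_avoiding_le
    (hP : ∀ p ∈ P, p.1.1 ≠ p.2.1 ∧ p.1.2 ∈ N p.1.1 ∧ p.2.2 ∈ N p.2.1)
    (hq : ∀ p ∈ P, 1 ≤ q * (#(N p.1.1) * #(N p.2.1)))
    (hΔ : ∀ p ∈ P, #(P.filter fun t => ¬Disjoint (coords t) (coords p)) ≤ Δ)
    (hqΔ : 4 * q * Δ ≤ 1) {S S' : Finset ((ι × β) × (ι × β))} (hSP : S ⊆ P) (hS' : S' ⊆ S) :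
    (1 - 2 * q) ^ #(S \ S') * #(avoiding N S') ≤ #(avoiding N S) := by
  induction S using Finset.strongInduction generalizing S' with
  | H S ih =>
  obtain rfl | hss := hS'.eq_or_ssubset
  · simp
  obtain ⟨p, hpS, hpS'⟩ := exists_of_ssubset hss
  obtain ⟨hab, hu, hv⟩ := hP p (hSP hpS)
  have hq0 : 0 < q := pos_of_mul_pos_left (one_pos.trans_le (hq p (hSP hpS))) (by positivity)
  have hΔ1 : (1 : ℝ) ≤ Δ :=
    le_trans (by exact_mod_cast one_le_card_filter_not_disjoint_coords (hSP hpS)) (hΔ p (hSP hpS))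
  have hq4 : 4 * q ≤ 1 := by nlinarith
  set T := S.erase p
  have hTS : T ⊂ S := erase_ssubset hpS
  have hTP : T ⊆ P := hTS.subset.trans hSP
  set T' := T.filter fun t => Disjoint (coords t) (coords p)
  have hdep : (#(T \ T') : ℝ) ≤ Δ := by
    refine le_trans ?_ (hΔ p (hSP hpS))
    rw [← filter_not]
    exact_mod_cast card_le_card (filter_subset_filter _ hTP)
  have hhalf : 1 / 2 ≤ (1 - 2 * q) ^ #(T \ T') :=
    calc 1 / 2 ≤ 1 + #(T \ T') * (-2 * q) := by nlinarith
      _ ≤ (1 + -2 * q) ^ #(T \ T') := one_add_mul_le_pow (by linarith) _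
      _ = (1 - 2 * q) ^ #(T \ T') := by ring
  have hT' : (#(avoiding N T') : ℝ) ≤ 2 * #(avoiding N T) := by
    have := ih T hTS hTP (S' := T') (filter_subset _ _)
    nlinarith [(#(avoiding N T')).cast_nonneg (α := ℝ)]
  have hstep := one_sub_two_mul_card_avoiding_le hab hu hv (hq p (hSP hpS)) hT'
  rw [insert_erase hpS] at hstep
  have hcard : #(S \ S') = #(T \ S') + 1 := by
    rw [erase_sdiff_comm, card_erase_add_one (mem_sdiff.2 ⟨hpS, hpS'⟩)]
  calc (1 - 2 * q) ^ #(S \ S') * #(avoiding N S')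
      = (1 - 2 * q) * ((1 - 2 * q) ^ #(T \ S') * #(avoiding N S')) := by
        rw [hcard, pow_succ]; ring
    _ ≤ (1 - 2 * q) * #(avoiding N T) := by
        gcongr
        · linarith
        · exact ih T hTS hTP (subset_erase.2 ⟨hS', hpS'⟩)
    _ ≤ #(avoiding N S) := hstep

theorem avoiding_nonempty (hN : ∀ i, (N i).Nonempty)
    (hP : ∀ p ∈ P, p.1.1 ≠ p.2.1 ∧ p.1.2 ∈ N p.1.1 ∧ p.2.2 ∈ N p.2.1)
    (hq : ∀ p ∈ P, 1 ≤ q * (#(N p.1.1) * #(N p.2.1)))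
    (hΔ : ∀ p ∈ P, #(P.filter fun t => ¬Disjoint (coords t) (coords p)) ≤ Δ)
    (hqΔ : 4 * q * Δ ≤ 1) : (avoiding N P).Nonempty := by
  rcases P.eq_empty_or_nonempty with rfl | ⟨p, hp⟩
  · rw [avoiding_empty]
    exact piFinset_nonempty.2 hN
  have hq0 : 0 < q := pos_of_mul_pos_left (one_pos.trans_le (hq p hp)) (by positivity)
  have hΔ1 : (1 : ℝ) ≤ Δ :=
    le_trans (by exact_mod_cast one_le_card_filter_not_disjoint_coords hp) (hΔ p hp)
  have key := pow_mul_card_avoiding_le hP hq hΔ hqΔ subset_rfl (empty_subset P)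
  rw [sdiff_empty, avoiding_empty] at key
  have hpi : (0 : ℝ) < #(piFinset N) := by exact_mod_cast card_pos.2 (piFinset_nonempty.2 hN)
  have hpos : (0 : ℝ) < #(avoiding N P) :=
    (mul_pos (pow_pos (by nlinarith) _) hpi).trans_le key
  exact card_pos.1 (by exact_mod_cast hpos)

end LocalLemma

section Relation

variable [Fintype β] (N) (Bad : ι × β → ι × β → Prop) [DecidableRel Bad]

def badPairs : Finset ((ι × β) × (ι × β)) :=
  univ.filter fun t => t.1.2 ∈ N t.1.1 ∧ t.2.2 ∈ N t.2.1 ∧ t.1.1 ≠ t.2.1 ∧ Bad t.1 t.2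

variable {N Bad} {k : ℝ}

theorem card_badPairs_filter_fst_le
    (hk : ∀ e, e.2 ∈ N e.1 → (#(univ.filter fun f => f.2 ∈ N f.1 ∧ Bad e f) : ℝ) ≤ k) (c : ι) :
    (#((badPairs N Bad).filter (·.1.1 = c)) : ℝ) ≤ #(N c) * k := by
  rw [card_eq_sum_card_fiberwise (f := (·.1.2)) (t := N c) fun t ht => by
    simp only [badPairs, coe_filter, mem_filter, mem_univ, true_and, Set.mem_ofPred_eq] at ht
    simpa [← ht.2] using ht.1.1]
  push_cast
  refine (sum_le_card_nsmul _ _ k fun w hw => ?_).trans_eq (nsmul_eq_mul _ _)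
  refine le_trans ?_ (hk (c, w) hw)
  refine Nat.cast_le.2 (card_le_card_of_injOn Prod.snd (fun t ht => ?_) fun t ht t' ht' h => ?_)
  · simp only [badPairs, coe_filter, mem_filter, mem_univ, true_and, Set.mem_ofPred_eq] at ht ⊢
    obtain ⟨⟨⟨-, hv, -, hbad⟩, hc⟩, hw⟩ := ht
    rw [← hc, ← hw]
    exact ⟨hv, hbad⟩
  · simp only [badPairs, coe_filter, mem_filter, mem_univ, true_and, Set.mem_ofPred_eq] at ht ht'
    exact Prod.ext (Prod.ext (ht.1.2.trans ht'.1.2.symm) (ht.2.trans ht'.2.symm)) h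

theorem card_badPairs_filter_snd_eq (hBad : ∀ e f, Bad e f → Bad f e) (c : ι) :
    #((badPairs N Bad).filter (·.2.1 = c)) = #((badPairs N Bad).filter (·.1.1 = c)) := by
  refine card_nbij' Prod.swap Prod.swap ?_ ?_ (fun _ _ => rfl) (fun _ _ => rfl) <;>
  · intro t ht
    simp only [badPairs, coe_filter, mem_filter, mem_univ, true_and, Set.mem_ofPred_eq,
      Prod.fst_swap, Prod.snd_swap] at ht ⊢
    obtain ⟨⟨hu, hv, hne, hbad⟩, hc⟩ := ht
    exact ⟨⟨hv, hu, hne.symm, hBad _ _ hbad⟩, hc⟩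

theorem card_badPairs_filter_not_disjoint_le (hBad : ∀ e f, Bad e f → Bad f e) {M : ℝ}
    (hM : ∀ i, (#(N i) : ℝ) ≤ M)
    (hk : ∀ e, e.2 ∈ N e.1 → (#(univ.filter fun f => f.2 ∈ N f.1 ∧ Bad e f) : ℝ) ≤ k)
    {p : (ι × β) × (ι × β)} (hp : p ∈ badPairs N Bad) :
    (#((badPairs N Bad).filter fun t => ¬Disjoint (coords t) (coords p)) : ℝ) ≤ 4 * M * k := by
  have hk0 : 0 ≤ k := le_trans (Nat.cast_nonneg _) (hk p.1 (mem_filter.1 hp).2.1)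
  have touch : ∀ c, (#((badPairs N Bad).filter (·.1.1 = c)) : ℝ)
      + #((badPairs N Bad).filter (·.2.1 = c)) ≤ 2 * M * k := fun c => by
    rw [card_badPairs_filter_snd_eq hBad]
    nlinarith [card_badPairs_filter_fst_le hk c, hM c]
  have hsub : (badPairs N Bad).filter (fun t => ¬Disjoint (coords t) (coords p))
      ⊆ ((badPairs N Bad).filter (·.1.1 = p.1.1) ∪ (badPairs N Bad).filter (·.2.1 = p.1.1))
        ∪ ((badPairs N Bad).filter (·.1.1 = p.2.1) ∪ (badPairs N Bad).filter (·.2.1 = p.2.1)) := by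
    intro t ht
    simp only [mem_filter, coords, disjoint_insert_left, disjoint_insert_right,
      disjoint_singleton, mem_insert, mem_singleton, mem_union] at ht ⊢
    tauto
  have hcard := (card_le_card hsub).trans
    ((card_union_le _ _).trans (add_le_add (card_union_le _ _) (card_union_le _ _)))
  have hcard' := (Nat.cast_le (α := ℝ)).2 hcard
  push_cast at hcard'
  linarith [touch p.1.1, touch p.2.1]

theorem exists_mem_piFinset_pairwise_not (hBad : ∀ e f, Bad e f → Bad f e) {m M : ℝ} (hm : 0 < m)
    (hN : ∀ i, m ≤ #(N i) ∧ #(N i) ≤ M)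
    (hk : ∀ e, e.2 ∈ N e.1 → (#(univ.filter fun f => f.2 ∈ N f.1 ∧ Bad e f) : ℝ) ≤ k)
    (hmk : 16 * M * k ≤ m ^ 2) :
    ∃ σ ∈ piFinset N, Pairwise fun i j => ¬Bad (i, σ i) (j, σ j) := by
  obtain ⟨σ, hσ⟩ := avoiding_nonempty (N := N) (P := badPairs N Bad) (q := 1 / m ^ 2)
    (Δ := 4 * M * k)
    (fun i => card_pos.1 (by exact_mod_cast hm.trans_le (hN i).1))
    (fun p hp => by
      simp only [badPairs, mem_filter, mem_univ, true_and] at hp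
      exact ⟨hp.2.2.1, hp.1, hp.2.1⟩)
    (fun p _ => by
      rw [one_div, inv_mul_eq_div, one_le_div (by positivity), sq]
      exact mul_le_mul (hN _).1 (hN _).1 hm.le (hm.le.trans (hN _).1))
    (fun p hp => card_badPairs_filter_not_disjoint_le hBad (fun i => (hN i).2) hk hp)
    (by rw [show 4 * (1 / m ^ 2) * (4 * M * k) = 16 * M * k / m ^ 2 by ring,
      div_le_one (by positivity)]; exact hmk)
  obtain ⟨hσN, hσP⟩ := mem_avoiding.1 hσ
  refine ⟨σ, hσN, fun i j hij hbad => hσP ((i, σ i), (j, σ j)) ?_ ⟨rfl, rfl⟩⟩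
  have hσN' := mem_piFinset.1 hσN
  simp only [badPairs, mem_filter, mem_univ, true_and]
  exact ⟨hσN' i, hσN' j, hij, hbad⟩

end Relation

end PairEvents

section Bipartite

variable {α β ι : Type*} [Fintype β] [DecidableEq ι] (iX : α → ι) (iV : β → ι)
  {adj : α → β → Prop} [∀ a b, Decidable (adj a b)]

theorem card_filter_adj_le (hedge : ∀ a b, adj a b → iX a = iV b) (a : α) :
    #(univ.filter (adj a)) ≤ #(univ.filter fun b => iV b = iX a) :=
  card_le_card (monotone_filter_right _ fun b _ hb => (hedge a b hb).symm)

theorem card_filter_adj_and_or_le [Fintype α] [DecidableEq α] [DecidableEq β]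
    (hedge : ∀ a b, adj a b → iX a = iV b) (R : α × β → Prop) [DecidablePred R] (b : β) :
    #(univ.filter fun f : α × β => adj f.1 f.2 ∧ (R f ∨ b = f.2))
      ≤ #(univ.filter fun f : α × β => adj f.1 f.2 ∧ R f)
        + #(univ.filter fun a => iX a = iV b) := by
  have hsub : univ.filter (fun f : α × β => adj f.1 f.2 ∧ (R f ∨ b = f.2))
      ⊆ univ.filter (fun f : α × β => adj f.1 f.2 ∧ R f)
        ∪ univ.filter (fun f : α × β => adj f.1 f.2 ∧ b = f.2) := by
    intro f
    simp only [mem_filter, mem_univ, true_and, mem_union]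
    tauto
  refine (card_le_card hsub).trans ((card_union_le _ _).trans (add_le_add le_rfl ?_))
  refine card_le_card_of_injOn Prod.fst (fun f hf => ?_) fun f hf f' hf' h => ?_
  · simp only [coe_filter, mem_univ, true_and, Set.mem_ofPred_eq] at hf ⊢
    rw [hedge _ _ hf.1, hf.2]
  · simp only [coe_filter, mem_univ, true_and, Set.mem_ofPred_eq] at hf hf'
    exact Prod.ext h (hf.2.symm.trans hf'.2)

end Bipartite

theorem sixteen_mul_le_sq {d ε μ n r : ℝ} (hr : 0 < r) (hε : ε ≤ d ^ 2 / 64)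
    (hμ : μ ≤ d ^ 2 / (64 * r)) :
    16 * (2 * n / r) * (μ * n + ε * n / r) ≤ (d * n / r) ^ 2 := by
  have hμr : μ * r ≤ d ^ 2 / 64 := by
    have := (le_div_iff₀ (by positivity)).1 hμ
    linarith
  calc 16 * (2 * n / r) * (μ * n + ε * n / r) = 32 * (μ * r + ε) * (n / r) ^ 2 := by
        field_simp
        ring
    _ ≤ 32 * (d ^ 2 / 64 + d ^ 2 / 64) * (n / r) ^ 2 := by gcongr
    _ = (d * n / r) ^ 2 := by ring

/-- Corollary `cor:manyswitch`.
Let `1/n ≪ μ ≪ ε ≪ d` and `μ ≪ 1/r`. Given disjoint sets `V₁,…,V_r` of sizes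
between `n/(2r)` and `2n/r` (totalling `n` vertices) and disjoint sets `X₁,…,X_r`
with `|X_i| ≤ εn/r`, a bipartite graph between `X = ∪X_i` and `V = ∪V_i` whose
edges join `X_i` to `V_i` and whose `X`-side degrees are at least `dn/r`,
and any `μn`-bounded system of conflicts, there is a conflict-free matching
covering `X`. -/
theorem stmt7 :
    ∀ d : ℝ, 0 < d → d ≤ 1 →
    ∃ ε₀ > (0 : ℝ), ∀ ε : ℝ, 0 < ε → ε ≤ ε₀ →
    ∀ r : ℕ, 1 ≤ r →
    ∃ μ₀ > (0 : ℝ), ∀ μ : ℝ, 0 < μ → μ ≤ μ₀ →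
    ∃ n₀ : ℕ, ∀ n : ℕ, n₀ ≤ n →
    ∀ (α β : Type) [Fintype α] [Fintype β] [DecidableEq α] [DecidableEq β]
      (iX : α → Fin r) (iV : β → Fin r)
      (adj : α → β → Prop) [∀ a b, Decidable (adj a b)]
      (F : α × β → α × β → Prop) [∀ e f, Decidable (F e f)],
    -- V = ∪ V_i has n vertices, with n/(2r) ≤ |V_i| ≤ 2n/r
    Fintype.card β = n →
    (∀ i : Fin r, (n : ℝ) / (2 * r) ≤ ((Finset.univ.filter fun b => iV b = i).card : ℝ) ∧
      ((Finset.univ.filter fun b => iV b = i).card : ℝ) ≤ 2 * n / r) →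
    -- |X_i| ≤ εn/r
    (∀ i : Fin r, ((Finset.univ.filter fun a => iX a = i).card : ℝ) ≤ ε * n / r) →
    -- every edge joins X_i and V_i for some i
    (∀ a b, adj a b → iX a = iV b) →
    -- d_G(x) ≥ dn/r for all x ∈ X
    (∀ a : α, d * n / r ≤ ((Finset.univ.filter fun b => adj a b).card : ℝ)) →
    -- F is a (symmetric) system of conflicts on the edges, μn-bounded
    (∀ e f, F e f → F f e) →
    (∀ a b, adj a b →
      (((Finset.univ : Finset (α × β)).filter fun e => adj e.1 e.2 ∧ F (a, b) e).card : ℝ) ≤ μ * n) →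
    -- conclusion: a conflict-free matching covering X
    ∃ m : α → β, Function.Injective m ∧ (∀ a, adj a (m a)) ∧
      ∀ a a' : α, a ≠ a' → ¬ F (a, m a) (a', m a') := by
  intro d hd0 _
  refine ⟨d ^ 2 / 64, by positivity, fun ε _ hε r hr => ?_⟩
  have hr0 : (0 : ℝ) < r := by exact_mod_cast hr
  refine ⟨d ^ 2 / (64 * r), by positivity, fun μ _ hμ => ⟨1, fun n hn α β _ _ _ _ iX iV adj _ F _
    _ hV hX hedge hdeg hFsym hFbd => ?_⟩⟩
  have hn0 : (0 : ℝ) < n := by exact_mod_cast hn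
  have hk : ∀ e : α × β, e.2 ∈ univ.filter (adj e.1) →
      (#(univ.filter fun f : α × β => f.2 ∈ univ.filter (adj f.1) ∧ (F e f ∨ e.2 = f.2)) : ℝ)
        ≤ μ * n + ε * n / r := by
    intro e he
    rw [mem_filter] at he
    simp only [mem_filter, mem_univ, true_and]
    have hcard := card_filter_adj_and_or_le iX iV hedge (F e) e.2
    rw [← hedge _ _ he.2] at hcard
    refine (Nat.cast_le.2 hcard).trans ?_
    push_cast
    exact add_le_add (hFbd _ _ he.2) (hX _)
  obtain ⟨m, hmN, hm⟩ := PairEvents.exists_mem_piFinset_pairwise_not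
    (N := fun a => univ.filter (adj a)) (fun e f h => h.imp (hFsym e f) Eq.symm)
    (m := d * n / r) (M := 2 * n / r) (by positivity)
    (fun a => ⟨hdeg a, (Nat.cast_le.2 (card_filter_adj_le iX iV hedge a)).trans (hV _).2⟩)
    hk (sixteen_mul_le_sq hr0 hε hμ)
  have hadj : ∀ a, adj a (m a) := fun a => by simpa using mem_piFinset.1 hmN a
  exact ⟨m, fun a a' h => by_contra fun hne => hm hne (Or.inr h), hadj,
    fun a a' hne hF => hm hne (Or.inl hF)⟩
end

section
/- Suppose 1/n ≪ μ ≪ ε ≪ p, d, 1/Δ. Let G be a lower (ε,d)-regular bipartite graph between V and V' with εn ≤ |V|,|V'| ≤ 2n, and let c : E(G) → {S ⊆ C : |S| = Δ} be a μn-bounded edge set colouring. Choose a random subset C' ⊆ C by including each colour independently with probability p. Then with probability at least 1 − e^{−μ^{−0.9} n}, the subgraph G_{C'} consisting of edges e with c(e) ⊆ C' is lower (2ε, p^Δ d)-regular. -/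
/-!
For fixed `S' ⊆ V`, `T ⊆ V'` with `|S'| ≥ 2ε|V|` and `|T| ≥ 2ε|V'|`, the number `X` of edges of
`G[S', T]` whose colour set lies in `C'` has mean `p^Δ e_G(S', T) ≥ p^Δ (d - ε)|S'||T|`, and
adding one colour `γ` to `C'` changes `X` by at most the number of edges whose colour set contains
`γ`, which is at most `μn`. McDiarmid's inequality, proved by bounding the exponential moment one
colour at a time, then bounds the probability of `X ≤ 𝔼X - ε|S'||T|` by `exp(-ε¹⁰n/(Δμ))`, since
the squared differences sum to at most `μn · Δ e(G) ≤ 4Δμn³`. A union bound over the at most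
`2^{4n} ≤ e^{3n}` pairs `(S', T)` finishes the proof, as `μ ≪ ε` gives `ε¹⁰/(Δμ) ≥ μ^{-0.9} + 3`.
-/

open Finset Real

section RandomSubset

variable {C : Type*}

/-- Expectation of `f` at the random subset of `U` containing each element independently with
probability `p`. -/
noncomputable def subsetExpect (p : ℝ) (U : Finset C) (f : Finset C → ℝ) : ℝ :=
  ∑ S ∈ U.powerset, p ^ #S * (1 - p) ^ (#U - #S) * f S

noncomputable def subsetProb (p : ℝ) (U : Finset C) (P : Finset C → Prop) [DecidablePred P] : ℝ :=
  subsetExpect p U fun S => if P S then 1 else 0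

lemma subsetProb_univ [Fintype C] (p : ℝ) (P : Finset C → Prop) [DecidablePred P] :
    subsetProb p univ P =
      ∑ S : Finset C, if P S then p ^ #S * (1 - p) ^ (Fintype.card C - #S) else 0 := by
  simp only [subsetProb, subsetExpect, powerset_univ, card_univ, mul_ite, mul_one, mul_zero]

variable {p : ℝ} {U : Finset C}

lemma subsetExpect_congr {f g : Finset C → ℝ} (h : ∀ S ⊆ U, f S = g S) :
    subsetExpect p U f = subsetExpect p U g :=
  sum_congr rfl fun S hS => by rw [h S (mem_powerset.1 hS)]

lemma subsetExpect_mono (hp0 : 0 ≤ p) (hp1 : p ≤ 1) {f g : Finset C → ℝ}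
    (h : ∀ S ⊆ U, f S ≤ g S) : subsetExpect p U f ≤ subsetExpect p U g :=
  sum_le_sum fun S hS => mul_le_mul_of_nonneg_left (h S (mem_powerset.1 hS))
    (mul_nonneg (pow_nonneg hp0 _) (pow_nonneg (sub_nonneg.2 hp1) _))

lemma subsetExpect_const (p : ℝ) (U : Finset C) (a : ℝ) : subsetExpect p U (fun _ => a) = a := by
  rw [subsetExpect, ← sum_mul, sum_pow_mul_eq_add_pow, add_sub_cancel, one_pow, one_mul]

lemma subsetExpect_const_mul (a : ℝ) (f : Finset C → ℝ) :
    subsetExpect p U (fun S => a * f S) = a * subsetExpect p U f := by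
  simp only [subsetExpect, mul_sum]
  exact sum_congr rfl fun S _ => by ring

lemma subsetExpect_add (f g : Finset C → ℝ) :
    subsetExpect p U (fun S => f S + g S) = subsetExpect p U f + subsetExpect p U g := by
  simp only [subsetExpect, mul_add, sum_add_distrib]

lemma subsetExpect_sum {ι : Type*} (I : Finset ι) (f : ι → Finset C → ℝ) :
    subsetExpect p U (fun S => ∑ i ∈ I, f i S) = ∑ i ∈ I, subsetExpect p U (f i) := by
  simp only [subsetExpect, mul_sum]
  exact sum_comm

lemma subsetProb_mono (hp0 : 0 ≤ p) (hp1 : p ≤ 1) {P Q : Finset C → Prop} [DecidablePred P]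
    [DecidablePred Q] (h : ∀ S ⊆ U, P S → Q S) : subsetProb p U P ≤ subsetProb p U Q :=
  subsetExpect_mono hp0 hp1 fun S hS => by
    split_ifs with hP hQ
    · rfl
    · exact absurd (h S hS hP) hQ
    · exact zero_le_one
    · rfl

lemma subsetProb_add_subsetProb_not (p : ℝ) (U : Finset C) (P : Finset C → Prop)
    [DecidablePred P] : subsetProb p U P + subsetProb p U (fun S => ¬P S) = 1 := by
  rw [subsetProb, subsetProb, ← subsetExpect_add,
    subsetExpect_congr (g := fun _ => 1) fun S _ => by by_cases hP : P S <;> simp [hP],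
    subsetExpect_const]

lemma subsetProb_exists_le (hp0 : 0 ≤ p) (hp1 : p ≤ 1) {ι : Type*} (I : Finset ι)
    (Q : ι → Finset C → Prop) [∀ i, DecidablePred (Q i)] :
    subsetProb p U (fun S => ∃ i ∈ I, Q i S) ≤ ∑ i ∈ I, subsetProb p U (Q i) := by
  simp only [subsetProb, ← subsetExpect_sum]
  refine subsetExpect_mono hp0 hp1 fun S _ => ?_
  split_ifs with h
  · obtain ⟨i, hi, hQ⟩ := h
    exact (if_pos hQ).symm.le.trans
      (single_le_sum (f := fun i => if Q i S then (1 : ℝ) else 0)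
        (fun j _ => by split_ifs <;> norm_num) hi)
  · exact sum_nonneg fun j _ => by split_ifs <;> norm_num

variable [DecidableEq C]

lemma subsetExpect_insert {γ : C} (hγ : γ ∉ U) (f : Finset C → ℝ) :
    subsetExpect p (insert γ U) f =
      subsetExpect p U fun S => p * f (insert γ S) + (1 - p) * f S := by
  rw [subsetExpect, sum_powerset_insert hγ, subsetExpect, add_comm, ← sum_add_distrib]
  refine sum_congr rfl fun S hS => ?_
  have hSU := mem_powerset.1 hS
  rw [card_insert_of_notMem (fun h => hγ (hSU h)), card_insert_of_notMem hγ,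
    Nat.add_sub_add_right, Nat.succ_sub (card_le_card hSU), pow_succ, pow_succ]
  ring

lemma subsetProb_subset {A : Finset C} (hA : A ⊆ U) : subsetProb p U (A ⊆ ·) = p ^ #A := by
  induction U using Finset.induction_on generalizing A with
  | empty => simp [subset_empty.1 hA, subsetProb, subsetExpect]
  | insert γ V hγ ih =>
    rw [subsetProb, subsetExpect_insert hγ]
    by_cases hγA : γ ∈ A
    · have hcard : #A = #(A.erase γ) + 1 := (card_erase_add_one hγA).symm
      rw [subsetExpect_congr (g := fun S => p * if A.erase γ ⊆ S then 1 else 0),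
        subsetExpect_const_mul]
      · rw [← subsetProb, ih (subset_insert_iff.1 hA), hcard, pow_succ, mul_comm]
      · intro S hS
        have : ¬A ⊆ S := fun h => hγ (hS (h hγA))
        simp [subset_insert_iff, this]
    · rw [subsetExpect_congr (g := fun S => if A ⊆ S then 1 else 0), ← subsetProb,
        ih ((subset_insert_iff_of_notMem hγA).1 hA)]
      intro S _
      simp only [subset_insert_iff_of_notMem hγA]
      ring

def HasBoundedDifferences (U : Finset C) (f : Finset C → ℝ) (c : C → ℝ) : Prop :=
  ∀ γ ∈ U, ∀ S ⊆ U, γ ∉ S → |f (insert γ S) - f S| ≤ c γ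

lemma HasBoundedDifferences.average {f : Finset C → ℝ} {c : C → ℝ} {γ : C} (hγ : γ ∉ U)
    (hf : HasBoundedDifferences (insert γ U) f c) (hp0 : 0 ≤ p) (hp1 : p ≤ 1) :
    HasBoundedDifferences U (fun S => p * f (insert γ S) + (1 - p) * f S) c := by
  intro γ' hγ' S hSU hγ'S
  have h₁ := hf γ' (mem_insert_of_mem hγ') (insert γ S) (insert_subset_insert γ hSU)
    (by rw [mem_insert]; rintro (rfl | h); exacts [hγ hγ', hγ'S h])
  have h₂ := hf γ' (mem_insert_of_mem hγ') S (hSU.trans (subset_insert γ U)) hγ'S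
  calc |p * f (insert γ (insert γ' S)) + (1 - p) * f (insert γ' S)
          - (p * f (insert γ S) + (1 - p) * f S)|
      = |p * (f (insert γ' (insert γ S)) - f (insert γ S))
          + (1 - p) * (f (insert γ' S) - f S)| := by
        rw [insert_comm]; ring_nf
    _ ≤ p * c γ' + (1 - p) * c γ' := by
        refine (abs_add_le _ _).trans ?_
        rw [abs_mul, abs_mul, abs_of_nonneg hp0, abs_of_nonneg (sub_nonneg.2 hp1)]
        gcongr
    _ = c γ' := by ring

lemma bernoulli_exp_le (hp0 : 0 ≤ p) (hp1 : p ≤ 1) {δ c L : ℝ} (hδ : |δ| ≤ c)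
    (hL : |L| * c ≤ 1) :
    p * exp (L * ((1 - p) * δ)) + (1 - p) * exp (L * -(p * δ)) ≤ exp (L ^ 2 * c ^ 2) := by
  have exp_le_quadratic : ∀ x : ℝ, |x| ≤ 1 → exp x ≤ 1 + x + x ^ 2 := fun x hx => by
    linarith [(abs_le.1 (abs_exp_sub_one_sub_id_le hx)).2]
  set y := L * δ
  have hy : |y| ≤ 1 := by
    rw [abs_mul]; exact (mul_le_mul_of_nonneg_left hδ (abs_nonneg L)).trans hL
  have hy2 : y ^ 2 ≤ L ^ 2 * c ^ 2 := by
    rw [mul_pow, ← sq_abs δ]; gcongr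
  have h₁ := exp_le_quadratic ((1 - p) * y) (by
    rw [abs_mul, abs_of_nonneg (sub_nonneg.2 hp1)]; nlinarith [abs_nonneg y])
  have h₂ := exp_le_quadratic (-(p * y)) (by
    rw [abs_neg, abs_mul, abs_of_nonneg hp0]; nlinarith [abs_nonneg y])
  rw [show L * ((1 - p) * δ) = (1 - p) * y by ring, show L * -(p * δ) = -(p * y) by ring]
  calc p * exp ((1 - p) * y) + (1 - p) * exp (-(p * y))
      ≤ p * (1 + (1 - p) * y + ((1 - p) * y) ^ 2) + (1 - p) * (1 + -(p * y) + (-(p * y)) ^ 2) := by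
        gcongr
    _ = 1 + p * (1 - p) * y ^ 2 := by ring
    _ ≤ 1 + L ^ 2 * c ^ 2 := by nlinarith [sq_nonneg y, mul_nonneg hp0 (sub_nonneg.2 hp1)]
    _ ≤ exp (L ^ 2 * c ^ 2) := by linarith [add_one_le_exp (L ^ 2 * c ^ 2)]

theorem subsetExpect_exp_le (hp0 : 0 ≤ p) (hp1 : p ≤ 1) {f : Finset C → ℝ} {c : C → ℝ} {L : ℝ}
    (hf : HasBoundedDifferences U f c) (hL : ∀ γ ∈ U, |L| * c γ ≤ 1) :
    subsetExpect p U (fun S => exp (L * (f S - subsetExpect p U f))) ≤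
      exp (L ^ 2 * ∑ γ ∈ U, c γ ^ 2) := by
  induction U using Finset.induction_on generalizing f with
  | empty => simp [subsetExpect]
  | insert γ V hγ ih =>
    -- reveal `γ` first: given the rest of `S`, `f - m` is `g - m` shifted by `(1 - p) δ` or `-p δ`
    set g := fun S => p * f (insert γ S) + (1 - p) * f S with hg
    rw [subsetExpect_insert hγ, subsetExpect_insert hγ f, ← hg, sum_insert hγ, mul_add, exp_add]
    calc _ ≤ subsetExpect p V (fun S => exp (L ^ 2 * c γ ^ 2) *
            exp (L * (g S - subsetExpect p V g))) := subsetExpect_mono hp0 hp1 fun S hS => ?_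
      _ ≤ _ := by
          rw [subsetExpect_const_mul]
          gcongr
          exact ih (hf.average hγ hp0 hp1) fun γ' h => hL γ' (mem_insert_of_mem h)
    set m := subsetExpect p V g
    set δ := f (insert γ S) - f S
    have hδ : |δ| ≤ c γ :=
      hf γ (mem_insert_self γ V) S (hS.trans (subset_insert γ V)) fun h => hγ (hS h)
    have key := bernoulli_exp_le hp0 hp1 hδ (hL γ (mem_insert_self γ V))
    rw [show L * (f (insert γ S) - m) = L * (g S - m) + L * ((1 - p) * δ) by
        simp only [hg, δ]; ring,
      show L * (f S - m) = L * (g S - m) + L * -(p * δ) by simp only [hg, δ]; ring,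
      exp_add, exp_add]
    nlinarith [exp_pos (L * (g S - m))]

theorem subsetProb_le_subsetExpect_sub_le (hp0 : 0 ≤ p) (hp1 : p ≤ 1) {f : Finset C → ℝ}
    {c : C → ℝ} (hf : HasBoundedDifferences U f c) {L : ℝ} (t : ℝ) (hL0 : 0 ≤ L)
    (hL : ∀ γ ∈ U, L * c γ ≤ 1) :
    subsetProb p U (fun S => f S ≤ subsetExpect p U f - t) ≤
      exp (-(L * t) + L ^ 2 * ∑ γ ∈ U, c γ ^ 2) := by
  set m := subsetExpect p U f
  calc subsetProb p U (fun S => f S ≤ m - t)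
      ≤ subsetExpect p U (fun S => exp (-(L * t)) * exp (-L * (f S - m))) :=
        subsetExpect_mono hp0 hp1 fun S _ => by
          split_ifs with h
          · rw [← exp_add]; exact one_le_exp (by nlinarith)
          · positivity
    _ ≤ exp (-(L * t)) * exp ((-L) ^ 2 * ∑ γ ∈ U, c γ ^ 2) := by
        rw [subsetExpect_const_mul]
        gcongr
        exact subsetExpect_exp_le hp0 hp1 hf fun γ hγ => by
          rw [abs_neg, abs_of_nonneg hL0]; exact hL γ hγ
    _ = _ := by rw [neg_sq, exp_add]

end RandomSubset

section ColourCount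

variable {E C : Type*} [DecidableEq C] {p : ℝ} {U : Finset C} (P : Finset E) (c : E → Finset C)

lemma subsetExpect_card_filter_subset {Δ : ℕ} (hcU : ∀ e ∈ P, c e ⊆ U)
    (hc : ∀ e ∈ P, #(c e) = Δ) :
    subsetExpect p U (fun S => (#{e ∈ P | c e ⊆ S} : ℝ)) = p ^ Δ * #P := by
  simp only [natCast_card_filter, subsetExpect_sum]
  calc ∑ e ∈ P, subsetProb p U (c e ⊆ ·) = ∑ _e ∈ P, p ^ Δ :=
        sum_congr rfl fun e he => by rw [subsetProb_subset (hcU e he), hc e he]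
    _ = _ := by rw [sum_const, nsmul_eq_mul, mul_comm]

lemma hasBoundedDifferences_card_filter_subset :
    HasBoundedDifferences U (fun S => (#{e ∈ P | c e ⊆ S} : ℝ)) (fun γ => #{e ∈ P | γ ∈ c e}) := by
  classical
  intro γ _ S _ hγS
  have hsub : {e ∈ P | c e ⊆ S} ⊆ {e ∈ P | c e ⊆ insert γ S} :=
    monotone_filter_right P fun _ _ h => h.trans (subset_insert γ S)
  rw [← Nat.cast_sub (card_le_card hsub), ← card_sdiff_of_subset hsub, Nat.abs_cast]
  refine Nat.cast_le.2 (card_le_card fun e he => ?_)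
  simp only [mem_sdiff, mem_filter] at he ⊢
  exact ⟨he.1.1, by_contra fun h => he.2 ⟨he.1.1, (subset_insert_iff_of_notMem h).1 he.1.2⟩⟩

lemma sum_sq_card_filter_mem_le {Δ : ℕ} {M : ℝ} (hcU : ∀ e ∈ P, c e ⊆ U)
    (hc : ∀ e ∈ P, #(c e) = Δ) (hM : ∀ γ ∈ U, (#{e ∈ P | γ ∈ c e} : ℝ) ≤ M) :
    ∑ γ ∈ U, (#{e ∈ P | γ ∈ c e} : ℝ) ^ 2 ≤ M * (Δ * #P) := by
  have hsum : ∑ γ ∈ U, (#{e ∈ P | γ ∈ c e} : ℝ) = Δ * #P := by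
    have := sum_card_bipartiteAbove_eq_sum_card_bipartiteBelow (s := U) (t := P)
      (r := fun γ e => γ ∈ c e)
    simp only [bipartiteAbove, bipartiteBelow, filter_mem_eq_inter] at this
    rw_mod_cast [this, sum_congr rfl fun e he => by rw [inter_eq_right.2 (hcU e he), hc e he],
      sum_const, smul_eq_mul, mul_comm]
  calc _ ≤ ∑ γ ∈ U, M * #{e ∈ P | γ ∈ c e} :=
        sum_le_sum fun γ hγ => by
          rw [sq]; exact mul_le_mul_of_nonneg_right (hM γ hγ) (by positivity)
    _ = _ := by rw [← mul_sum, hsum]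

theorem subsetProb_card_filter_subset_le (hp0 : 0 ≤ p) (hp1 : p ≤ 1) {Δ : ℕ} {M L : ℝ} (t : ℝ)
    (hcU : ∀ e ∈ P, c e ⊆ U) (hc : ∀ e ∈ P, #(c e) = Δ)
    (hM : ∀ γ ∈ U, (#{e ∈ P | γ ∈ c e} : ℝ) ≤ M) (hL0 : 0 ≤ L) (hLM : L * M ≤ 1) :
    subsetProb p U (fun S => (#{e ∈ P | c e ⊆ S} : ℝ) ≤ p ^ Δ * #P - t) ≤
      exp (-(L * t) + L ^ 2 * (M * (Δ * #P))) := by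
  have := subsetProb_le_subsetExpect_sub_le hp0 hp1 (hasBoundedDifferences_card_filter_subset P c)
    t hL0 fun γ hγ => (mul_le_mul_of_nonneg_left (hM γ hγ) hL0).trans hLM
  rw [subsetExpect_card_filter_subset P c hcU hc] at this
  exact this.trans (exp_le_exp.2 (by gcongr; exact sum_sq_card_filter_mem_le P c hcU hc hM))

end ColourCount

section LowerRegular

variable {α β : Type*} [Fintype α] [Fintype β]

def IsLowerRegular (r : α → β → Prop) [∀ a, DecidablePred (r a)] (ε d : ℝ) : Prop :=
  ∀ (S : Finset α) (T : Finset β), ε * Fintype.card α ≤ #S → ε * Fintype.card β ≤ #T →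
    d - ε ≤ (#(Rel.interedges r S T) : ℝ) / (#S * #T)

noncomputable instance (r : α → β → Prop) [∀ a, DecidablePred (r a)] (ε d : ℝ) :
    Decidable (IsLowerRegular r ε d) :=
  Classical.dec _

-- `L = ε⁵/(2Δμn)` minimises `-L t + L² V` for `t = 4ε⁵n²` and `V = 4Δμn³`
lemma slicing_exponent_le {Δ ε μ n A B P : ℝ} (hε : 0 < ε) (hΔ : 0 < Δ) (hμ : 0 < μ) (hn : 0 < n)
    (hA : 2 * ε ^ 2 * n ≤ A) (hB : 2 * ε ^ 2 * n ≤ B) (hP : P ≤ 4 * n ^ 2) :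
    -(ε ^ 5 / (2 * Δ * μ * n) * (ε * (A * B))) + (ε ^ 5 / (2 * Δ * μ * n)) ^ 2 * (μ * n * (Δ * P))
      ≤ -(ε ^ 10 / (Δ * μ) * n) := by
  set L := ε ^ 5 / (2 * Δ * μ * n)
  have hL : 0 ≤ L := by positivity
  have hAB : 4 * ε ^ 4 * n ^ 2 ≤ A * B := by
    nlinarith [mul_le_mul hA hB (by positivity) (by nlinarith)]
  have h₁ : L * (ε * (4 * ε ^ 4 * n ^ 2)) = 2 * (ε ^ 10 / (Δ * μ) * n) := by
    simp only [L]; field_simp; ring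
  have h₂ : L ^ 2 * (μ * n * (Δ * (4 * n ^ 2))) = ε ^ 10 / (Δ * μ) * n := by
    simp only [L]; field_simp; ring
  have h₃ : L * (ε * (4 * ε ^ 4 * n ^ 2)) ≤ L * (ε * (A * B)) := by gcongr
  have h₄ : L ^ 2 * (μ * n * (Δ * P)) ≤ L ^ 2 * (μ * n * (Δ * (4 * n ^ 2))) := by gcongr
  linarith

variable {C : Type*} [Fintype C] [DecidableEq C] (adj : α → β → Prop) [∀ a b, Decidable (adj a b)]
  (c : α → β → Finset C) {Δ n : ℕ} {p d ε μ : ℝ}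

theorem subsetProb_edgeDensity_lt_le (hp0 : 0 ≤ p) (hp1 : p ≤ 1) (hε0 : 0 < ε) (hε1 : ε ≤ 1)
    (hΔ : 1 ≤ Δ) (hμ : 0 < μ) (hn : 0 < n)
    (hα : ε * n ≤ Fintype.card α) (hα' : (Fintype.card α : ℝ) ≤ 2 * n)
    (hβ : ε * n ≤ Fintype.card β) (hβ' : (Fintype.card β : ℝ) ≤ 2 * n)
    (hreg : IsLowerRegular adj ε d) (hcard : ∀ a b, adj a b → #(c a b) = Δ)
    (hbound : ∀ γ, (#{q : α × β | adj q.1 q.2 ∧ γ ∈ c q.1 q.2} : ℝ) ≤ μ * n)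
    {S' : Finset α} {T : Finset β} (hS' : 2 * ε * Fintype.card α ≤ #S')
    (hT : 2 * ε * Fintype.card β ≤ #T) :
    subsetProb p univ (fun S => (#(Rel.interedges (fun a b => adj a b ∧ c a b ⊆ S) S' T) : ℝ) /
        (#S' * #T) < p ^ Δ * d - 2 * ε) ≤ exp (-(ε ^ 10 / (Δ * μ) * n)) := by
  set P := Rel.interedges adj S' T
  set L := ε ^ 5 / (2 * Δ * μ * n)
  have hn' : (0 : ℝ) < n := Nat.cast_pos.2 hn
  have hΔ' : (1 : ℝ) ≤ Δ := Nat.one_le_cast.2 hΔ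
  have hA : 2 * ε ^ 2 * n ≤ #S' := by nlinarith
  have hB : 2 * ε ^ 2 * n ≤ #T := by nlinarith
  have hAB : (0 : ℝ) < #S' * #T := by
    have : 0 < 2 * ε ^ 2 * n := by positivity
    exact mul_pos (by linarith) (by linarith)
  have hP : (d - ε) * (#S' * #T) ≤ #P :=
    (le_div_iff₀ hAB).1 (hreg S' T (by nlinarith) (by nlinarith))
  have hP' : (#P : ℝ) ≤ 4 * n ^ 2 := by
    have hPα : (#P : ℝ) ≤ #S' * #T := by exact_mod_cast Rel.card_interedges_le_mul adj S' T
    have hS'α : (#S' : ℝ) ≤ Fintype.card α := by exact_mod_cast card_le_univ S'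
    have hTβ : (#T : ℝ) ≤ Fintype.card β := by exact_mod_cast card_le_univ T
    nlinarith
  have hdeg : ∀ γ, (#{e ∈ P | γ ∈ c e.1 e.2} : ℝ) ≤ μ * n := fun γ => by
    refine le_trans (Nat.cast_le.2 (card_le_card fun e he => ?_)) (hbound γ)
    simp only [mem_filter, mem_univ, true_and] at he ⊢
    exact ⟨(Rel.mem_interedges_iff.1 he.1).2.2, he.2⟩
  have hLM : L * (μ * n) ≤ 1 := by
    rw [show L * (μ * n) = ε ^ 5 / (2 * Δ) by simp only [L]; field_simp, div_le_one (by positivity)]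
    nlinarith [pow_le_one₀ hε0.le hε1 (n := 5)]
  calc _ ≤ subsetProb p univ
          (fun S => (#{e ∈ P | c e.1 e.2 ⊆ S} : ℝ) ≤ p ^ Δ * #P - ε * (#S' * #T)) :=
        subsetProb_mono hp0 hp1 fun S _ h => by
          rw [div_lt_iff₀ hAB] at h
          rw [show {e ∈ P | c e.1 e.2 ⊆ S} = Rel.interedges (fun a b => adj a b ∧ c a b ⊆ S) S' T
            from filter_filter _ _ _]
          nlinarith [mul_le_mul_of_nonneg_left hP (pow_nonneg hp0 Δ),
            mul_le_mul_of_nonneg_right (pow_le_one₀ hp0 hp1 : p ^ Δ ≤ 1) (mul_pos hε0 hAB).le]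
    _ ≤ exp (-(L * (ε * (#S' * #T))) + L ^ 2 * (μ * n * (Δ * #P))) :=
        subsetProb_card_filter_subset_le P (fun e => c e.1 e.2) hp0 hp1 _
          (fun _ _ => subset_univ _) (fun e he => hcard _ _ (mem_filter.1 he).2)
          (fun γ _ => hdeg γ) (by positivity) hLM
    _ ≤ _ := exp_le_exp.2 (slicing_exponent_le hε0 (by linarith) hμ hn' hA hB hP')

lemma card_finset_prod_le_exp {n : ℕ} (hα : (Fintype.card α : ℝ) ≤ 2 * n)
    (hβ : (Fintype.card β : ℝ) ≤ 2 * n) :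
    (Fintype.card (Finset α × Finset β) : ℝ) ≤ exp (3 * n) := by
  have hαβ : Fintype.card α + Fintype.card β ≤ 4 * n := by
    have : (Fintype.card α + Fintype.card β : ℝ) ≤ 4 * n := by linarith
    exact_mod_cast this
  have h16 : (16 : ℝ) ≤ exp 3 := by
    have h : (2.7 : ℝ) ^ 3 ≤ exp 1 ^ 3 := by gcongr; linarith [exp_one_gt_d9]
    rw [exp_one_pow] at h
    norm_num at h ⊢
    linarith
  rw [Fintype.card_prod, Fintype.card_finset, Fintype.card_finset, ← pow_add]
  push_cast
  calc (2 : ℝ) ^ (Fintype.card α + Fintype.card β) ≤ 2 ^ (4 * n) :=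
        pow_le_pow_right₀ one_le_two hαβ
    _ = 16 ^ n := by rw [pow_mul]; norm_num
    _ ≤ exp 3 ^ n := by gcongr
    _ = exp (3 * n) := by rw [← exp_nat_mul, mul_comm]

theorem subsetProb_not_isLowerRegular_le (hp0 : 0 ≤ p) (hp1 : p ≤ 1) (hε0 : 0 < ε) (hε1 : ε ≤ 1)
    (hΔ : 1 ≤ Δ) (hμ : 0 < μ) (hn : 0 < n)
    (hα : ε * n ≤ Fintype.card α) (hα' : (Fintype.card α : ℝ) ≤ 2 * n)
    (hβ : ε * n ≤ Fintype.card β) (hβ' : (Fintype.card β : ℝ) ≤ 2 * n)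
    (hreg : IsLowerRegular adj ε d) (hcard : ∀ a b, adj a b → #(c a b) = Δ)
    (hbound : ∀ γ, (#{q : α × β | adj q.1 q.2 ∧ γ ∈ c q.1 q.2} : ℝ) ≤ μ * n) :
    subsetProb p univ
        (fun S => ¬IsLowerRegular (fun a b => adj a b ∧ c a b ⊆ S) (2 * ε) (p ^ Δ * d)) ≤
      exp (3 * n) * exp (-(ε ^ 10 / (Δ * μ) * n)) := by
  set I := (univ : Finset (Finset α × Finset β)).filter
    fun q => 2 * ε * Fintype.card α ≤ #q.1 ∧ 2 * ε * Fintype.card β ≤ #q.2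
  calc _ ≤ subsetProb p univ (fun S => ∃ q ∈ I,
          (#(Rel.interedges (fun a b => adj a b ∧ c a b ⊆ S) q.1 q.2) : ℝ) / (#q.1 * #q.2) <
            p ^ Δ * d - 2 * ε) :=
        subsetProb_mono hp0 hp1 fun S _ h => by
          simp only [IsLowerRegular, not_forall, not_le] at h
          obtain ⟨S', T, hS', hT, hlt⟩ := h
          exact ⟨(S', T), mem_filter.2 ⟨mem_univ _, hS', hT⟩, hlt⟩
    _ ≤ ∑ q ∈ I, subsetProb p univ (fun S =>
          (#(Rel.interedges (fun a b => adj a b ∧ c a b ⊆ S) q.1 q.2) : ℝ) / (#q.1 * #q.2) <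
            p ^ Δ * d - 2 * ε) := subsetProb_exists_le hp0 hp1 I _
    _ ≤ ∑ _q ∈ I, exp (-(ε ^ 10 / (Δ * μ) * n)) := sum_le_sum fun q hq =>
          subsetProb_edgeDensity_lt_le adj c hp0 hp1 hε0 hε1 hΔ hμ hn hα hα' hβ hβ' hreg hcard
            hbound (mem_filter.1 hq).2.1 (mem_filter.1 hq).2.2
    _ ≤ _ := by
        rw [sum_const, nsmul_eq_mul]
        gcongr
        exact (Nat.cast_le.2 (card_le_univ I)).trans (card_finset_prod_le_exp hα' hβ')

end LowerRegular

lemma exists_rpow_add_three_le_div {K : ℝ} (hK : 0 < K) :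
    ∃ μ₀ > 0, ∀ μ : ℝ, 0 < μ → μ ≤ μ₀ → μ ^ (-0.9 : ℝ) + 3 ≤ K / μ := by
  refine ⟨min ((K / 2) ^ 10) (K / 6), by positivity, fun μ hμ hμ₀ => ?_⟩
  have h₁ : μ ^ (0.1 : ℝ) ≤ K / 2 :=
    calc μ ^ (0.1 : ℝ) ≤ ((K / 2) ^ 10) ^ (0.1 : ℝ) :=
          rpow_le_rpow hμ.le (hμ₀.trans (min_le_left _ _)) (by norm_num)
      _ = K / 2 := by rw [← rpow_natCast, ← rpow_mul (by positivity)]; norm_num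
  have h₂ : 3 * μ ≤ K / 2 := by linarith [hμ₀.trans (min_le_right _ _)]
  rw [show (-0.9 : ℝ) = 0.1 - 1 by norm_num, rpow_sub hμ, rpow_one, div_add' _ _ _ hμ.ne',
    div_le_div_iff_of_pos_right hμ]
  linarith

/-- Proposition `prop:regularity slicing`.
Let `1/n ≪ μ ≪ ε ≪ p, d, 1/Δ`. If `G` is a lower (ε,d)-regular bipartite graph
between `V`,`V'` with `εn ≤ |V|,|V'| ≤ 2n` and `c` is a `μn`-bounded edge set
colouring by `Δ`-sets, then activating each colour independently with probability
`p`, the activated subgraph `G_{C'}` is lower `(2ε, p^Δ d)`-regular with probability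
at least `1 − e^{−μ^{−0.9} n}`. -/
theorem stmt8 :
    ∀ (Δ : ℕ), 1 ≤ Δ → ∀ p d : ℝ, 0 < p → p ≤ 1 → 0 < d → d ≤ 1 →
    ∃ ε₀ > (0 : ℝ), ∀ ε : ℝ, 0 < ε → ε ≤ ε₀ →
    ∃ μ₀ > (0 : ℝ), ∀ μ : ℝ, 0 < μ → μ ≤ μ₀ →
    ∃ n₀ : ℕ, ∀ n : ℕ, n₀ ≤ n →
    ∀ (α β C : Type) [Fintype α] [Fintype β] [Fintype C] [DecidableEq C]
      (adj : α → β → Prop) [∀ a b, Decidable (adj a b)]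
      (c : α → β → Finset C),
    -- εn ≤ |V|, |V'| ≤ 2n
    ε * n ≤ (Fintype.card α : ℝ) → (Fintype.card α : ℝ) ≤ 2 * n →
    ε * n ≤ (Fintype.card β : ℝ) → (Fintype.card β : ℝ) ≤ 2 * n →
    -- G is lower (ε,d)-regular
    (∀ (S : Finset α) (T : Finset β),
      ε * Fintype.card α ≤ S.card → ε * Fintype.card β ≤ T.card →
      d - ε ≤ (((S ×ˢ T).filter fun q => adj q.1 q.2).card : ℝ) / (S.card * T.card)) →
    -- c is an edge set colouring into Δ-sets which is μn-bounded
    (∀ a b, adj a b → (c a b).card = Δ) →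
    (∀ γ : C, (((Finset.univ : Finset (α × β)).filter
        fun q => adj q.1 q.2 ∧ γ ∈ c q.1 q.2).card : ℝ) ≤ μ * n) →
    -- with probability ≥ 1 - e^{-μ^{-0.9} n}, G_{C'} is lower (2ε, p^Δ d)-regular
    1 - Real.exp (-(Real.rpow μ (-0.9) * n)) ≤
      ∑ S : Finset C,
        (if (∀ (S' : Finset α) (T : Finset β),
              2 * ε * Fintype.card α ≤ S'.card → 2 * ε * Fintype.card β ≤ T.card →
              p ^ Δ * d - 2 * ε ≤
                (((S' ×ˢ T).filter fun q => adj q.1 q.2 ∧ c q.1 q.2 ⊆ S).card : ℝ) /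
                  (S'.card * T.card))
          then p ^ S.card * (1 - p) ^ (Fintype.card C - S.card) else 0) := by
  intro Δ hΔ p d hp0 hp1 _ _
  refine ⟨1, one_pos, fun ε hε0 hε1 => ?_⟩
  obtain ⟨μ₀, hμ₀, hμ⟩ := exists_rpow_add_three_le_div (by positivity : 0 < ε ^ 10 / Δ)
  refine ⟨μ₀, hμ₀, fun μ hμ0 hμ1 => ⟨1, fun n hn α β C _ _ _ _ adj _ c hα hα' hβ hβ' hreg hcard
    hbound => ?_⟩⟩
  have hbad := subsetProb_not_isLowerRegular_le adj c hp0.le hp1 hε0 hε1 hΔ hμ0 hn hα hα' hβ hβ'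
    hreg hcard hbound
  have hexp : exp (3 * n) * exp (-(ε ^ 10 / (Δ * μ) * n)) ≤ exp (-(Real.rpow μ (-0.9) * n)) := by
    rw [← exp_add, exp_le_exp, ← div_div, rpow_eq_pow]
    nlinarith [hμ μ hμ0 hμ1, (Nat.cast_nonneg n : (0 : ℝ) ≤ n)]
  have hgood := subsetProb_add_subsetProb_not p univ
    fun S => IsLowerRegular (fun a b => adj a b ∧ c a b ⊆ S) (2 * ε) (p ^ Δ * d)
  refine le_of_le_of_eq (by linarith) ((subsetProb_univ p
    fun S => IsLowerRegular (fun a b => adj a b ∧ c a b ⊆ S) (2 * ε) (p ^ Δ * d)).trans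
      (sum_congr rfl fun S _ => if_congr Iff.rfl rfl rfl))
end
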